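/- (Kodama-like conservation law in Kerr–Vaidya spacetime.) Let a ∈ ℝ and let M : ℝ → ℝ be twice differentiable. Define the densitized components of the Kodama-like current, F₀(v,r,ϑ) := a²·sin³ϑ·(a²·cos²ϑ − r²)·M′(v)/ρ⁴, F₁(v,r,ϑ) := sinϑ·[(ρ⁴ + r⁴ + r²·a²·sin²ϑ − a⁴·cos²ϑ)·M′(v) − r·ρ²·a²·sin²ϑ·M″(v)]/ρ⁴, F₂(v,r,ϑ) := −r·a²·sinϑ·sin(2ϑ)·M′(v)/ρ⁴. Then for all v ∈ ℝ, r > 0 and ϑ ∈ ℝ, ∂F₀/∂v (v,r,ϑ) + ∂F₁/∂r (v,r,ϑ) + ∂F₂/∂ϑ (v,r,ϑ) = 0. (Since the fourth component of the current is independent of ψ, this is exactly the statement that the coordinate divergence (ρ²·sinϑ)⁻¹·∂_μ(ρ²·sinϑ·J^μ) of the current J^a = G^{ab}K_b generated by the Kodama-like vector field K = ∂/∂v vanishes, i.e. the Kodama-like current is covariantly conserved.) -/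

import Mathlib

noncomputable section

open Real

/-- ρ² = r² + a²·cos²ϑ. -/
def rho2 (a r θ : ℝ) : ℝ := r ^ 2 + a ^ 2 * Real.cos θ ^ 2

/-- Densitized `v`-component `√(−g)·J^v` of the Kodama-like current of Kerr–Vaidya
spacetime. -/
def F0 (a : ℝ) (M : ℝ → ℝ) (v r θ : ℝ) : ℝ :=
  a ^ 2 * Real.sin θ ^ 3 * (a ^ 2 * Real.cos θ ^ 2 - r ^ 2) * deriv M v / rho2 a r θ ^ 2

/-- Densitized `r`-component `√(−g)·J^r` of the Kodama-like current of Kerr–Vaidya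
spacetime. -/
def F1 (a : ℝ) (M : ℝ → ℝ) (v r θ : ℝ) : ℝ :=
  Real.sin θ *
      ((rho2 a r θ ^ 2 + r ^ 4 + r ^ 2 * a ^ 2 * Real.sin θ ^ 2
          - a ^ 4 * Real.cos θ ^ 2) * deriv M v
        - r * rho2 a r θ * a ^ 2 * Real.sin θ ^ 2 * deriv (deriv M) v)
    / rho2 a r θ ^ 2

/-- Densitized `ϑ`-component `√(−g)·J^ϑ` of the Kodama-like current of Kerr–Vaidya
spacetime. -/
def F2 (a : ℝ) (M : ℝ → ℝ) (v r θ : ℝ) : ℝ :=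
  -(r * a ^ 2 * Real.sin θ * Real.sin (2 * θ) * deriv M v) / rho2 a r θ ^ 2

/-- Kodama-like conservation law in Kerr–Vaidya spacetime: the coordinate divergence of the
densitized Kodama-like current `J^a = G^{ab}K_b`, `K = ∂/∂v`, vanishes, i.e. the current is
covariantly conserved. -/
theorem kodama_current_conserved (a : ℝ) (M : ℝ → ℝ)
    (hM : Differentiable ℝ M) (hM' : Differentiable ℝ (deriv M)) :
    ∀ (v r θ : ℝ), 0 < r →
      deriv (fun v' => F0 a M v' r θ) v
        + deriv (fun r' => F1 a M v r' θ) r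
        + deriv (fun θ' => F2 a M v r θ') θ = 0 := by
  intro v r θ hr
  have hρpos : 0 < r ^ 2 + a ^ 2 * Real.cos θ ^ 2 := by
    have h1 : 0 < r ^ 2 := pow_pos hr 2
    have h2 : 0 ≤ a ^ 2 * Real.cos θ ^ 2 := by positivity
    linarith
  have hρ : r ^ 2 + a ^ 2 * Real.cos θ ^ 2 ≠ 0 := ne_of_gt hρpos
  have hρ2 : (r ^ 2 + a ^ 2 * Real.cos θ ^ 2) ^ 2 ≠ 0 := pow_ne_zero 2 hρ
  simp only [F0, F1, F2, rho2]
  -- derivative in v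
  have h0 : HasDerivAt
      (fun v' => a ^ 2 * Real.sin θ ^ 3 * (a ^ 2 * Real.cos θ ^ 2 - r ^ 2) * deriv M v'
        / (r ^ 2 + a ^ 2 * Real.cos θ ^ 2) ^ 2)
      (a ^ 2 * Real.sin θ ^ 3 * (a ^ 2 * Real.cos θ ^ 2 - r ^ 2) * deriv (deriv M) v
        / (r ^ 2 + a ^ 2 * Real.cos θ ^ 2) ^ 2) v :=
    (((hM' v).hasDerivAt.const_mul _).div_const _)
  -- derivative in r
  have hrho : HasDerivAt (fun r' : ℝ => r' ^ 2 + a ^ 2 * Real.cos θ ^ 2) (2 * r) r := by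
    simpa using (hasDerivAt_pow 2 r).add_const (a ^ 2 * Real.cos θ ^ 2)
  have h4 : HasDerivAt (fun r' : ℝ => r' ^ 4) ((4 : ℝ) * r ^ 3) r := by
    simpa using hasDerivAt_pow 4 r
  have h1 : HasDerivAt
      (fun r' => Real.sin θ *
        (((r' ^ 2 + a ^ 2 * Real.cos θ ^ 2) ^ 2 + r' ^ 4 + r' ^ 2 * a ^ 2 * Real.sin θ ^ 2
            - a ^ 4 * Real.cos θ ^ 2) * deriv M v
          - r' * (r' ^ 2 + a ^ 2 * Real.cos θ ^ 2) * a ^ 2 * Real.sin θ ^ 2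
              * deriv (deriv M) v)
        / (r' ^ 2 + a ^ 2 * Real.cos θ ^ 2) ^ 2)
      ((Real.sin θ *
          ((4 * (r ^ 2 + a ^ 2 * Real.cos θ ^ 2) * r + 4 * r ^ 3
              + 2 * r * a ^ 2 * Real.sin θ ^ 2) * deriv M v
            - ((r ^ 2 + a ^ 2 * Real.cos θ ^ 2) + 2 * r ^ 2) * a ^ 2 * Real.sin θ ^ 2
                * deriv (deriv M) v)
          * (r ^ 2 + a ^ 2 * Real.cos θ ^ 2) ^ 2
        - Real.sin θ *
          (((r ^ 2 + a ^ 2 * Real.cos θ ^ 2) ^ 2 + r ^ 4 + r ^ 2 * a ^ 2 * Real.sin θ ^ 2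
              - a ^ 4 * Real.cos θ ^ 2) * deriv M v
            - r * (r ^ 2 + a ^ 2 * Real.cos θ ^ 2) * a ^ 2 * Real.sin θ ^ 2
                * deriv (deriv M) v)
          * (4 * (r ^ 2 + a ^ 2 * Real.cos θ ^ 2) * r))
        / ((r ^ 2 + a ^ 2 * Real.cos θ ^ 2) ^ 2) ^ 2) r := by
    have hnum := ((((hrho.pow 2).add h4).add
        (((hasDerivAt_pow 2 r).mul_const (a ^ 2)).mul_const (Real.sin θ ^ 2))).sub_const
        (a ^ 4 * Real.cos θ ^ 2)).mul_const (deriv M v) |>.sub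
        (((((hasDerivAt_id' (x := r)).mul hrho).mul_const (a ^ 2)).mul_const
          (Real.sin θ ^ 2)).mul_const (deriv (deriv M) v)) |>.const_mul (Real.sin θ)
    exact (hnum.div (hrho.pow 2) hρ2).congr_deriv
      (by simp only [Pi.pow_apply, Pi.add_apply, Pi.sub_apply, Pi.mul_apply]; push_cast; ring)
  -- derivative in θ
  have hsin2 : HasDerivAt (fun t : ℝ => Real.sin (2 * t)) (Real.cos (2 * θ) * 2) θ := by
    simpa [Function.comp_def] using (Real.hasDerivAt_sin (2 * θ)).comp θ ((hasDerivAt_id' (x := θ)).const_mul 2)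
  have hDθ : HasDerivAt (fun θ' : ℝ => (r ^ 2 + a ^ 2 * Real.cos θ' ^ 2) ^ 2)
      (2 * (r ^ 2 + a ^ 2 * Real.cos θ ^ 2)
        * (a ^ 2 * (2 * Real.cos θ * (-Real.sin θ)))) θ := by
    have := ((((Real.hasDerivAt_cos θ).pow 2).const_mul (a ^ 2)).const_add (r ^ 2)).pow 2
    exact this.congr_deriv (by simp only [Pi.pow_apply]; push_cast; ring)
  have h2 : HasDerivAt
      (fun θ' => -(r * a ^ 2 * Real.sin θ' * Real.sin (2 * θ') * deriv M v)
        / (r ^ 2 + a ^ 2 * Real.cos θ' ^ 2) ^ 2)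
      ((-((r * a ^ 2 * Real.cos θ * Real.sin (2 * θ)
            + r * a ^ 2 * Real.sin θ * (Real.cos (2 * θ) * 2)) * deriv M v)
          * (r ^ 2 + a ^ 2 * Real.cos θ ^ 2) ^ 2
        - -(r * a ^ 2 * Real.sin θ * Real.sin (2 * θ) * deriv M v)
          * (2 * (r ^ 2 + a ^ 2 * Real.cos θ ^ 2)
            * (a ^ 2 * (2 * Real.cos θ * (-Real.sin θ)))))
        / ((r ^ 2 + a ^ 2 * Real.cos θ ^ 2) ^ 2) ^ 2) θ := by
    have hnum := ((((Real.hasDerivAt_sin θ).const_mul (r * a ^ 2)).mul hsin2).mul_const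
      (deriv M v)).neg
    exact (hnum.div hDθ hρ2).congr_deriv
      (by simp only [Pi.neg_apply, Pi.mul_apply])
  rw [h0.deriv, h1.deriv, h2.deriv]
  have hsc : Real.sin θ ^ 2 + Real.cos θ ^ 2 = 1 := Real.sin_sq_add_cos_sq θ
  have key :
      a ^ 2 * Real.sin θ ^ 3 * (a ^ 2 * Real.cos θ ^ 2 - r ^ 2) * deriv (deriv M) v
        / (r ^ 2 + a ^ 2 * Real.cos θ ^ 2) ^ 2
      + (Real.sin θ *
          ((4 * (r ^ 2 + a ^ 2 * Real.cos θ ^ 2) * r + 4 * r ^ 3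
              + 2 * r * a ^ 2 * Real.sin θ ^ 2) * deriv M v
            - ((r ^ 2 + a ^ 2 * Real.cos θ ^ 2) + 2 * r ^ 2) * a ^ 2 * Real.sin θ ^ 2
                * deriv (deriv M) v)
          * (r ^ 2 + a ^ 2 * Real.cos θ ^ 2) ^ 2
        - Real.sin θ *
          (((r ^ 2 + a ^ 2 * Real.cos θ ^ 2) ^ 2 + r ^ 4 + r ^ 2 * a ^ 2 * Real.sin θ ^ 2
              - a ^ 4 * Real.cos θ ^ 2) * deriv M v
            - r * (r ^ 2 + a ^ 2 * Real.cos θ ^ 2) * a ^ 2 * Real.sin θ ^ 2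
                * deriv (deriv M) v)
          * (4 * (r ^ 2 + a ^ 2 * Real.cos θ ^ 2) * r))
        / ((r ^ 2 + a ^ 2 * Real.cos θ ^ 2) ^ 2) ^ 2
      + (-((r * a ^ 2 * Real.cos θ * Real.sin (2 * θ)
            + r * a ^ 2 * Real.sin θ * (Real.cos (2 * θ) * 2)) * deriv M v)
          * (r ^ 2 + a ^ 2 * Real.cos θ ^ 2) ^ 2
        - -(r * a ^ 2 * Real.sin θ * Real.sin (2 * θ) * deriv M v)
          * (2 * (r ^ 2 + a ^ 2 * Real.cos θ ^ 2)
            * (a ^ 2 * (2 * Real.cos θ * (-Real.sin θ)))))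
        / ((r ^ 2 + a ^ 2 * Real.cos θ ^ 2) ^ 2) ^ 2
      = (-4 * a ^ 4 * r ^ 3 * Real.sin θ * Real.cos θ ^ 2 * deriv M v
          - 4 * a ^ 6 * r * Real.sin θ * Real.cos θ ^ 4 * deriv M v)
        * (Real.sin θ ^ 2 + Real.cos θ ^ 2 - 1)
        / ((r ^ 2 + a ^ 2 * Real.cos θ ^ 2) ^ 2) ^ 2 := by
    have hρ4 : ((r ^ 2 + a ^ 2 * Real.cos θ ^ 2) ^ 2) ^ 2 ≠ 0 := pow_ne_zero 2 hρ2
    rw [Real.sin_two_mul, Real.cos_two_mul', div_add_div _ _ hρ2 hρ4,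
      div_add_div _ _ (mul_ne_zero hρ2 hρ4) hρ4,
      div_eq_div_iff (mul_ne_zero (mul_ne_zero hρ2 hρ4) hρ4) hρ4]
    ring
  rw [key, hsc]
  simp
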